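/- Fix σ > 0, γ > 0 and m₀ ∈ ℝ, and define h : ℝ → ℝ by h(m) = d_γ( φ(·; m, σ), φ(·; m₀, σ) ). Then h(m₀) = 0, h'(m₀) = 0, and h''(m₀) = (2π)^{-γ/2} σ^{-(γ+2)} (1+γ)^{-1/2}; equivalently, h''(m₀) = (1+γ) s_γ where s_γ := (2π)^{-γ/2} σ^{-(γ+2)} (1+γ)^{-3/2}. -/

import Mathlib

/-! Raising `φ(·; μ, σ)` to a power `r > 0` gives a multiple of a Gaussian, so every term of the
divergence is a Gaussian integral. The cross term `φ(·; m₀, σ)^γ φ(·; m, σ)` is, after completing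
the square, `exp(-γ (m - m₀)² / (2 (1 + γ) σ²))` times `φ(·; c, σ)^{1+γ}` for a shifted mean `c`.
Hence `h(m) = (1 + 1/γ) K (1 - exp(-α (m - m₀)²))` with `K = ∫ φ^{1+γ}` and
`α = γ / (2 (1 + γ) σ²)`, whose value, slope and curvature at `m₀` are `0`, `0` and
`2 α (1 + 1/γ) K`. -/

open MeasureTheory Real

/-- The `N(μ, σ²)` probability density function. -/
noncomputable def normalPDF (μ σ y : ℝ) : ℝ :=
  (Real.sqrt (2 * Real.pi * σ ^ 2))⁻¹ * Real.exp (-(y - μ) ^ 2 / (2 * σ ^ 2))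

/-- The density power divergence with tuning parameter `γ > 0` between densities `f₁, f₂`. -/
noncomputable def dpd (γ : ℝ) (f₁ f₂ : ℝ → ℝ) : ℝ :=
  ∫ y, ((f₂ y) ^ (1 + γ) - (1 + 1 / γ) * (f₂ y) ^ γ * f₁ y + (1 / γ) * (f₁ y) ^ (1 + γ))

lemma integral_exp_neg_mul_sub_sq (b c : ℝ) :
    ∫ y : ℝ, exp (-b * (y - c) ^ 2) = √(π / b) := by
  rw [integral_sub_right_eq_self (fun y => exp (-b * y ^ 2)) c, integral_gaussian]

lemma normalPDF_rpow (μ σ y r : ℝ) :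
    normalPDF μ σ y ^ r =
      (2 * π * σ ^ 2) ^ (-r / 2) * exp (-(r / (2 * σ ^ 2)) * (y - μ) ^ 2) := by
  have hP : 0 ≤ 2 * π * σ ^ 2 := by positivity
  rw [normalPDF, mul_rpow (by positivity) (exp_nonneg _), sqrt_eq_rpow, ← rpow_neg hP,
    ← rpow_mul hP, ← exp_mul]
  congr 2 <;> ring

section

variable {σ r : ℝ}

lemma integrable_normalPDF_rpow (hσ : σ ≠ 0) (hr : 0 < r) (μ : ℝ) :
    Integrable fun y => normalPDF μ σ y ^ r := by
  simp_rw [normalPDF_rpow]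
  exact ((integrable_exp_neg_mul_sq (by positivity)).comp_sub_right μ).const_mul _

lemma integral_normalPDF_rpow (hσ : σ ≠ 0) (hr : 0 < r) (μ : ℝ) :
    ∫ y, normalPDF μ σ y ^ r = (2 * π * σ ^ 2) ^ ((1 - r) / 2) * r ^ (-(1 : ℝ) / 2) := by
  have hP : 0 < 2 * π * σ ^ 2 := by positivity
  have hsqrt : √(π / (r / (2 * σ ^ 2))) = (2 * π * σ ^ 2) ^ ((1 : ℝ) / 2) * r ^ (-(1 : ℝ) / 2) := by
    rw [show π / (r / (2 * σ ^ 2)) = 2 * π * σ ^ 2 / r by field_simp, sqrt_eq_rpow,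
      div_rpow hP.le hr.le, div_eq_mul_inv, ← rpow_neg hr.le, neg_div]
  simp_rw [normalPDF_rpow]
  rw [integral_const_mul, integral_exp_neg_mul_sub_sq, hsqrt, ← mul_assoc, ← rpow_add hP]
  ring_nf

end

lemma normalPDF_rpow_mul_normalPDF {σ γ : ℝ} (hσ : σ ≠ 0) (hγ : 1 + γ ≠ 0) (μ₁ μ₂ y : ℝ) :
    normalPDF μ₁ σ y ^ γ * normalPDF μ₂ σ y =
      exp (-(γ / (2 * (1 + γ) * σ ^ 2)) * (μ₂ - μ₁) ^ 2) *
        normalPDF ((γ * μ₁ + μ₂) / (1 + γ)) σ y ^ (1 + γ) := by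
  have hP : 0 < 2 * π * σ ^ 2 := by positivity
  have hsquare : -(γ / (2 * σ ^ 2)) * (y - μ₁) ^ 2 + -(1 / (2 * σ ^ 2)) * (y - μ₂) ^ 2 =
      -(γ / (2 * (1 + γ) * σ ^ 2)) * (μ₂ - μ₁) ^ 2 +
        -((1 + γ) / (2 * σ ^ 2)) * (y - (γ * μ₁ + μ₂) / (1 + γ)) ^ 2 := by
    field_simp
    ring
  have hexp := congrArg exp hsquare
  rw [exp_add, exp_add] at hexp
  rw [← rpow_one (normalPDF μ₂ σ y), normalPDF_rpow, normalPDF_rpow, normalPDF_rpow,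
    show -(1 + γ) / 2 = -γ / 2 + -1 / 2 by ring, rpow_add hP]
  linear_combination (2 * π * σ ^ 2) ^ (-γ / 2) * (2 * π * σ ^ 2) ^ (-1 / 2 : ℝ) * hexp

theorem dpd_normalPDF_normalPDF {σ γ : ℝ} (hσ : σ ≠ 0) (hγ : 0 < 1 + γ) (m m₀ : ℝ) :
    dpd γ (normalPDF m σ) (normalPDF m₀ σ) =
      (1 + 1 / γ) * ((2 * π * σ ^ 2) ^ (-γ / 2) * (1 + γ) ^ (-(1 : ℝ) / 2)) *
        (1 - exp (-(γ / (2 * (1 + γ) * σ ^ 2)) * (m - m₀) ^ 2)) := by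
  have hK (μ : ℝ) : ∫ y, normalPDF μ σ y ^ (1 + γ) =
      (2 * π * σ ^ 2) ^ (-γ / 2) * (1 + γ) ^ (-(1 : ℝ) / 2) := by
    rw [integral_normalPDF_rpow hσ hγ, sub_add_cancel_left, neg_div]
  have hint := integrable_normalPDF_rpow hσ hγ
  have hcross := ((hint ((γ * m₀ + m) / (1 + γ))).const_mul
    (exp (-(γ / (2 * (1 + γ) * σ ^ 2)) * (m - m₀) ^ 2))).const_mul (1 + 1 / γ)
  simp only [dpd, mul_assoc (1 + 1 / γ), normalPDF_rpow_mul_normalPDF hσ hγ.ne']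
  rw [integral_add ?_ ((hint m).const_mul _), integral_sub (hint m₀) hcross,
    integral_const_mul, integral_const_mul, integral_const_mul, hK, hK, hK]
  · ring
  · exact (hint m₀).sub hcross

lemma hasDerivAt_one_sub_exp_neg_mul_sub_sq (α a x : ℝ) :
    HasDerivAt (fun x => 1 - exp (-α * (x - a) ^ 2))
      (2 * α * (x - a) * exp (-α * (x - a) ^ 2)) x := by
  have h := ((hasDerivAt_id' x).sub_const a |>.fun_pow 2 |>.const_mul (-α)).exp
  exact ((hasDerivAt_const x 1).fun_sub h).congr_deriv (by simp; ring)

lemma hasDerivAt_mul_sub_mul_exp_neg_mul_sub_sq (α a : ℝ) :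
    HasDerivAt (fun x => 2 * α * (x - a) * exp (-α * (x - a) ^ 2)) (2 * α) a := by
  have h := ((hasDerivAt_id' a).sub_const a |>.fun_pow 2 |>.const_mul (-α)).exp
  exact (((hasDerivAt_id' a).sub_const a).const_mul (2 * α) |>.fun_mul h).congr_deriv (by simp)

/-- for `h(m) = d_γ(φ(·;m,σ), φ(·;m₀,σ))` one has `h(m₀) = 0`, `h'(m₀) = 0` and
`h''(m₀) = (2π)^{−γ/2} σ^{−(γ+2)} (1+γ)^{−1/2} = (1+γ) s_γ` with
`s_γ = (2π)^{−γ/2} σ^{−(γ+2)} (1+γ)^{−3/2}`. -/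
theorem dpd_normal_mean_second_derivative
    (σ γ m₀ : ℝ) (hσ : 0 < σ) (hγ : 0 < γ) :
    let h : ℝ → ℝ := fun m => dpd γ (normalPDF m σ) (normalPDF m₀ σ)
    let sγ : ℝ := (2 * Real.pi) ^ (-γ / 2) * σ ^ (-(γ + 2)) * (1 + γ) ^ (-(3 : ℝ) / 2)
    h m₀ = 0 ∧ deriv h m₀ = 0 ∧
      deriv (deriv h) m₀ = (2 * Real.pi) ^ (-γ / 2) * σ ^ (-(γ + 2)) * (1 + γ) ^ (-(1 : ℝ) / 2) ∧
      deriv (deriv h) m₀ = (1 + γ) * sγ := by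
  intro h sγ
  have hγ' : 0 < 1 + γ := by linarith
  set K := (2 * π * σ ^ 2) ^ (-γ / 2) * (1 + γ) ^ (-(1 : ℝ) / 2)
  set α := γ / (2 * (1 + γ) * σ ^ 2)
  have hclosed : h = fun m => (1 + 1 / γ) * K * (1 - exp (-α * (m - m₀) ^ 2)) :=
    funext fun m => dpd_normalPDF_normalPDF hσ.ne' hγ' m m₀
  have hderiv :
      deriv h = fun m => (1 + 1 / γ) * K * (2 * α * (m - m₀) * exp (-α * (m - m₀) ^ 2)) :=
    funext fun m => hclosed ▸ ((hasDerivAt_one_sub_exp_neg_mul_sub_sq α m₀ m).const_mul _).deriv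
  have hderiv2 : deriv (deriv h) m₀ = (1 + 1 / γ) * K * (2 * α) :=
    hderiv ▸ ((hasDerivAt_mul_sub_mul_exp_neg_mul_sub_sq α m₀).const_mul _).deriv
  have hσpow : (σ ^ 2) ^ (-γ / 2) = σ ^ (-(γ + 2)) * σ ^ 2 := by
    rw [← rpow_add_natCast hσ.ne', ← rpow_natCast, ← rpow_mul hσ.le]
    congr 1
    push_cast
    ring
  have hcurv : (1 + 1 / γ) * K * (2 * α) =
      (2 * π) ^ (-γ / 2) * σ ^ (-(γ + 2)) * (1 + γ) ^ (-(1 : ℝ) / 2) := by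
    simp only [K, α]
    rw [mul_rpow (by positivity) (sq_nonneg σ), hσpow]
    field_simp
    ring
  refine ⟨by simp [hclosed], by simp [hderiv], hderiv2.trans hcurv, ?_⟩
  rw [hderiv2, hcurv, show -(1 : ℝ) / 2 = 1 + -(3 : ℝ) / 2 by norm_num,
    rpow_one_add' hγ'.le (by norm_num)]
  ring
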